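/- Let σ = {B_1,…,B_k} be a non-atomic set partition of [n] with blocks in increasing order of minima, let j be the smallest element of the underlying set of R(σ), and let B_r be the first block of R(σ). Then j ≥ 2, σ_{[j-1]} = {B_1, B_2, …, B_{r-1}}, and σ_{[j,n]} = R(σ) = {B_r, B_{r+1}, …, B_k}. -/

import Mathlib

/-- A block of a set partition: a finite set of positive integers. -/
abbrev Block : Type := Finset ℕ

/-- The underlying set of a list of blocks (the union of all blocks). -/
def support (P : List Block) : Finset ℕ := P.foldr (· ∪ ·) ∅

/-- `P` is a set partition of `[n] = {1,…,n}`: a list of pairwise disjoint nonempty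
blocks with union `{1,…,n}`, listed in increasing order of their minimal elements. -/
def IsPartition (n : ℕ) (P : List Block) : Prop :=
  (∀ B ∈ P, B.Nonempty) ∧ List.Pairwise Disjoint P ∧
    support P = Finset.Icc 1 n ∧
    List.Chain' (fun B C : Block => B.min < C.min) P

/-- Add `m` to every element of every block: `σ + m`. -/
def shiftUp (m : ℕ) (P : List Block) : List Block := P.map fun B => B.image (· + m)

/-- Subtract `m` from every element of every block. -/
def shiftDown (m : ℕ) (P : List Block) : List Block := P.map fun B => B.image (· - m)

/-- The slash product `π | σ` where `π` is a partition of `[m]`. -/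
def slash (m : ℕ) (P Q : List Block) : List Block := P ++ shiftUp m Q

/-- `P` is an atomic partition of `[n]`: it is not a slash product of two
nonempty partitions. -/
def Atomic (n : ℕ) (P : List Block) : Prop :=
  ¬ ∃ (a b : ℕ) (σ τ : List Block), 0 < a ∧ 0 < b ∧ a + b = n ∧
      IsPartition a σ ∧ IsPartition b τ ∧ P = slash a σ τ

/-- The split product `π ∘ σ` where `π` is a partition of `[m]`. -/
def splitProd (m : ℕ) (P Q : List Block) : List Block :=
  List.zipWith (· ∪ ·) P (shiftUp m Q) ++ P.drop Q.length ++ (shiftUp m Q).drop P.length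

/-- `P` is a splitable partition of `[n]`: a split product of two nonempty partitions. -/
def Splitable (n : ℕ) (P : List Block) : Prop :=
  ∃ (a b : ℕ) (σ τ : List Block), 0 < a ∧ 0 < b ∧ a + b = n ∧
      IsPartition a σ ∧ IsPartition b τ ∧ P = splitProd a σ τ

/-- The minimum of a block (`0` for the empty block). -/
def blockMin (B : Block) : ℕ := B.min.untopD 0

/-- The restriction `π_S`: the nonempty intersections `B ∩ S`, listed in
increasing order of their minimal elements. -/
def restrict (P : List Block) (S : Finset ℕ) : List Block :=
  (((P.map (· ∩ S)).filter fun B => decide B.Nonempty).mergeSort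
    fun B C => decide (blockMin B ≤ blockMin C))

/-- The blocks from position `d` on have union equal to an upper part
`{x_t, x_{t+1}, …, x_n}` of the underlying set. -/
def IsUpperSuffix (P : List Block) (d : ℕ) : Prop :=
  ∃ s ∈ support P, support (P.drop d) = (support P).filter (s ≤ ·)

instance (P : List Block) : DecidablePred (IsUpperSuffix P) := fun d => by
  unfold IsUpperSuffix; infer_instance

/-- `R(π)`: the longest proper-or-improper final segment `{B_r,…,B_k}` of the blocks
whose union is an upper part `{x_t,…,x_n}` of the underlying set. -/
def Rmap (P : List Block) : List Block :=
  P.drop ((((Finset.range P.length).filter fun d => IsUpperSuffix P d).max).unbotD 0)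

/-- `π = π_{[i-1]} ∘ (π_{[i,n]} − i + 1)`. -/
def SplitsAt (n i : ℕ) (P : List Block) : Prop :=
  P = splitProd (i - 1) (restrict P (Finset.Icc 1 (i - 1)))
        (shiftDown (i - 1) (restrict P (Finset.Icc i n)))

instance (n : ℕ) (P : List Block) : DecidablePred fun i => SplitsAt n i P := fun i => by
  unfold SplitsAt; infer_instance

/-- The index `i` in the definition of `φ`: the smallest element of the first block
`B_1` such that `π = π_{[i-1]} ∘ (π_{[i,n]} − i + 1)`. -/
def phiI (n : ℕ) (P : List Block) : ℕ :=
  (((P.headD ∅).filter fun i => 2 ≤ i ∧ SplitsAt n i P).min).untopD 0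

/-- The index `j` in the definition of `φ`: the smallest element of the underlying
set of `R(π_{[i,n]})`. -/
def phiJ (n : ℕ) (P : List Block) : ℕ :=
  ((support (Rmap (restrict P (Finset.Icc (phiI n P) n)))).min).untopD 0

/-- The map `φ`: `φ(π) = π_{[j-1]} | (π_{[j,n]} − j + 1)`. -/
def phi (n : ℕ) (P : List Block) : List Block :=
  slash (phiJ n P - 1) (restrict P (Finset.Icc 1 (phiJ n P - 1)))
    (shiftDown (phiJ n P - 1) (restrict P (Finset.Icc (phiJ n P) n)))

/-- `σ_{[j-1]} = σ_{[i-1]} ∘ (σ_{[i,j-1]} − i + 1)`. -/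
def SplitsAtRes (j i : ℕ) (P : List Block) : Prop :=
  restrict P (Finset.Icc 1 (j - 1)) =
    splitProd (i - 1) (restrict P (Finset.Icc 1 (i - 1)))
      (shiftDown (i - 1) (restrict P (Finset.Icc i (j - 1))))

instance (j : ℕ) (P : List Block) : DecidablePred fun i => SplitsAtRes j i P := fun i => by
  unfold SplitsAtRes; infer_instance

open scoped Classical in
/-- The map `ψ`. Here `j` is the smallest element of the underlying set of `R(σ)`,
`r` is the (0-based) position of the first block of `R(σ)`, and in the splitable case
`i` is the smallest element of `B_1` with `σ_{[j-1]} = σ_{[i-1]} ∘ (σ_{[i,j-1]} − i + 1)`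
and `q` is the (0-based) position of the first block contained in `[i-1]`. -/
noncomputable def psi (n : ℕ) (P : List Block) : List Block :=
  let j := ((support (Rmap P)).min).untopD 0
  if Splitable (j - 1) (restrict P (Finset.Icc 1 (j - 1))) then
    let i := (((P.headD ∅).filter fun i => 2 ≤ i ∧ SplitsAtRes j i P).min).untopD 0
    let q := P.findIdx fun B => decide (B ⊆ Finset.Icc 1 (i - 1))
    let r := P.length - (Rmap P).length
    P.take q ++ (List.zipWith (· ∪ ·) ((P.drop q).take (r - q)) (P.drop r)
      ++ ((P.drop q).take (r - q)).drop (P.drop r).length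
      ++ (P.drop r).drop (r - q))
  else
    splitProd (j - 1) (restrict P (Finset.Icc 1 (j - 1)))
      (shiftDown (j - 1) (restrict P (Finset.Icc j n)))

/-! A slash decomposition `σ = π | τ` makes the blocks of `τ` an upper suffix, so `R(σ)` is a
proper final segment `P.drop d` with `d ≥ 1`, whose union is an interval `[j, n]`. The first `d`
blocks then cover exactly `[1, j - 1]`; as every block lies inside one of the two intervals,
restricting to either interval just selects the corresponding segment, which is already sorted. -/

lemma mem_support {x : ℕ} {P : List Block} : x ∈ support P ↔ ∃ B ∈ P, x ∈ B := by
  induction P with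
  | nil => simp [support]
  | cons B Q ih => simp [support, ← ih]

lemma support_append (P Q : List Block) : support (P ++ Q) = support P ∪ support Q := by
  induction P with
  | nil => simp [support]
  | cons B R ih =>
    change B ∪ support (R ++ Q) = (B ∪ support R) ∪ support Q
    rw [ih, Finset.union_assoc]

lemma support_shiftUp (m : ℕ) (Q : List Block) :
    support (shiftUp m Q) = (support Q).image (· + m) := by
  induction Q with
  | nil => simp [support, shiftUp]
  | cons B R ih => simp_all [support, shiftUp, Finset.image_union]

lemma subset_support {B : Block} {P : List Block} (hB : B ∈ P) : B ⊆ support P :=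
  fun _ hx => mem_support.2 ⟨B, hB, hx⟩

lemma disjoint_support_of_pairwise_append {P Q : List Block}
    (h : (P ++ Q).Pairwise Disjoint) : Disjoint (support P) (support Q) := by
  rw [Finset.disjoint_left]
  intro x hxP hxQ
  obtain ⟨B, hB, hxB⟩ := mem_support.1 hxP
  obtain ⟨C, hC, hxC⟩ := mem_support.1 hxQ
  exact Finset.disjoint_left.1 ((List.pairwise_append.1 h).2.2 B hB C hC) hxB hxC

lemma exists_rmap_eq_drop {P : List Block} {d₀ : ℕ} (hlt : d₀ < P.length)
    (hd₀ : IsUpperSuffix P d₀) :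
    ∃ d, d₀ ≤ d ∧ d < P.length ∧ IsUpperSuffix P d ∧ Rmap P = P.drop d := by
  have hmem : d₀ ∈ (Finset.range P.length).filter (IsUpperSuffix P) := by simp [hlt, hd₀]
  obtain ⟨d, hmax⟩ := Finset.max_of_mem hmem
  obtain ⟨hdlt, hd⟩ := Finset.mem_filter.1 (Finset.mem_of_max hmax)
  refine ⟨d, WithBot.coe_le_coe.1 (hmax ▸ Finset.le_max hmem), Finset.mem_range.1 hdlt, hd, ?_⟩
  rw [Rmap, hmax]
  rfl

lemma filter_nonempty_map_inter_eq_nil {L : List Block} {S : Finset ℕ}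
    (h : Disjoint (support L) S) : (L.map (· ∩ S)).filter (fun B => decide B.Nonempty) = [] := by
  simp only [List.filter_eq_nil_iff, List.mem_map, decide_eq_true_eq,
    Finset.not_nonempty_iff_eq_empty]
  rintro _ ⟨B, hB, rfl⟩
  exact Finset.disjoint_iff_inter_eq_empty.1 (h.mono_left (subset_support hB))

lemma restrict_append_of_disjoint_right (L₁ : List Block) {L₂ : List Block} {S : Finset ℕ}
    (h : Disjoint (support L₂) S) : restrict (L₁ ++ L₂) S = restrict L₁ S := by
  simp only [restrict, List.map_append, List.filter_append, filter_nonempty_map_inter_eq_nil h,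
    List.append_nil]

lemma restrict_append_of_disjoint_left {L₁ : List Block} (L₂ : List Block) {S : Finset ℕ}
    (h : Disjoint (support L₁) S) : restrict (L₁ ++ L₂) S = restrict L₂ S := by
  simp only [restrict, List.map_append, List.filter_append, filter_nonempty_map_inter_eq_nil h,
    List.nil_append]

namespace IsPartition

variable {n : ℕ} {P : List Block}

lemma ne_nil (hP : IsPartition n P) (hn : 0 < n) : P ≠ [] := by
  rintro rfl
  have h1 : 1 ∈ Finset.Icc 1 n := Finset.mem_Icc.2 ⟨le_rfl, hn⟩
  simp [← hP.2.2.1, support] at h1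

lemma pairwise_blockMin_lt (hP : IsPartition n P) :
    P.Pairwise fun B C => blockMin B < blockMin C := by
  have : Trans (fun B C : Block => B.min < C.min) (fun B C : Block => B.min < C.min)
      (fun B C : Block => B.min < C.min) := ⟨lt_trans⟩
  refine (List.isChain_iff_pairwise.1 hP.2.2.2).imp_of_mem fun hB hC hlt => ?_
  obtain ⟨b, hb⟩ := Finset.min_of_nonempty (hP.1 _ hB)
  obtain ⟨c, hc⟩ := Finset.min_of_nonempty (hP.1 _ hC)
  rw [hb, hc, WithTop.coe_lt_coe] at hlt
  simpa only [blockMin, hb, hc, WithTop.untopD_coe] using hlt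

lemma restrict_eq_self_of_sublist (hP : IsPartition n P) {L : List Block} (hL : L.Sublist P)
    {S : Finset ℕ} (hS : support L ⊆ S) : restrict L S = L := by
  have hfix : (L.map (· ∩ S)).filter (fun B => decide B.Nonempty) = L := by
    rw [List.map_congr_left fun B hB => Finset.inter_eq_left.2 ((subset_support hB).trans hS),
      List.map_id', List.filter_eq_self]
    exact fun B hB => decide_eq_true (hP.1 B (hL.subset hB))
  rw [restrict, hfix]
  exact List.mergeSort_of_pairwise <|
    ((hP.pairwise_blockMin_lt).sublist hL).imp fun h => decide_eq_true h.le

lemma exists_isUpperSuffix_of_not_atomic (hP : IsPartition n P) (hNA : ¬ Atomic n P) :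
    ∃ d, 0 < d ∧ d < P.length ∧ IsUpperSuffix P d := by
  obtain ⟨a, b, σ, τ, ha, hb, rfl, hσ, hτ, rfl⟩ := not_not.1 hNA
  have hσ0 := List.length_pos_iff.2 (hσ.ne_nil ha)
  have hτ0 := List.length_pos_iff.2 (hτ.ne_nil hb)
  refine ⟨σ.length, hσ0, by simp [slash, shiftUp]; omega, a + 1, ?_, ?_⟩
  · rw [hP.2.2.1, Finset.mem_Icc]; omega
  · rw [hP.2.2.1, slash, List.drop_left, support_shiftUp, hτ.2.2.1]
    ext x
    simp only [Finset.mem_image, Finset.mem_filter, Finset.mem_Icc]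
    constructor
    · rintro ⟨y, hy, rfl⟩; omega
    · rintro ⟨⟨-, h₁⟩, h₂⟩; exact ⟨x - a, by omega, by omega⟩

lemma exists_support_drop_eq_Icc (hP : IsPartition n P) {d : ℕ} (hd : IsUpperSuffix P d) :
    ∃ s ≤ n, support (P.drop d) = Finset.Icc s n := by
  obtain ⟨s, hs, hdrop⟩ := hd
  rw [hP.2.2.1, Finset.mem_Icc] at hs
  refine ⟨s, hs.2, ?_⟩
  rw [hdrop, hP.2.2.1]
  ext x
  simp only [Finset.mem_filter, Finset.mem_Icc]
  omega

lemma support_take_eq_Icc (hP : IsPartition n P) {d s : ℕ} (hs : s ≤ n)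
    (hdrop : support (P.drop d) = Finset.Icc s n) :
    support (P.take d) = Finset.Icc 1 (s - 1) := by
  have hsplit := List.take_append_drop d P
  have hunion : support (P.take d) ∪ support (P.drop d) = Finset.Icc 1 n := by
    rw [← support_append, hsplit, hP.2.2.1]
  have hdisj := disjoint_support_of_pairwise_append (hsplit ▸ hP.2.1)
  ext x
  have hx := Finset.ext_iff.1 hunion x
  have hx' : x ∈ support (P.take d) → x ∉ support (P.drop d) := fun h =>
    Finset.disjoint_left.1 hdisj h
  simp only [hdrop, Finset.mem_union, Finset.mem_Icc] at hx hx' ⊢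
  constructor
  · intro h; have := hx.1 (Or.inl h); have := hx' h; omega
  · intro h; exact (hx.2 (by omega)).resolve_right (by omega)

end IsPartition

/-- Let `σ = {B_1,…,B_k}` be a non-atomic set partition of `[n]` and
let `j` be the smallest element of the underlying set of `R(σ)`, and `B_r` the first
block of `R(σ)` (so `R(σ) = P.drop (k - |R(σ)|)` starts at position `r`). Then `j ≥ 2`,
`σ_{[j-1]} = {B_1,…,B_{r-1}}`, and `σ_{[j,n]} = R(σ) = {B_r,…,B_k}`. -/
theorem restrict_take_drop_of_not_atomic (n : ℕ) (P : List Block)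
    (hP : IsPartition n P) (hNA : ¬ Atomic n P)
    (j : ℕ) (hj1 : j ∈ support (Rmap P)) (hj2 : ∀ x ∈ support (Rmap P), j ≤ x) :
    2 ≤ j ∧
      restrict P (Finset.Icc 1 (j - 1)) = P.take (P.length - (Rmap P).length) ∧
      restrict P (Finset.Icc j n) = Rmap P ∧
      Rmap P = P.drop (P.length - (Rmap P).length) := by
  obtain ⟨d₀, hd₀, hd₀P, hd₀U⟩ := hP.exists_isUpperSuffix_of_not_atomic hNA
  obtain ⟨d, hd₀d, hdP, hdU, hR⟩ := exists_rmap_eq_drop hd₀P hd₀U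
  obtain ⟨s, hsn, hdrop⟩ := hP.exists_support_drop_eq_Icc hdU
  rw [hR, hdrop] at hj1 hj2
  obtain rfl : j = s :=
    le_antisymm (hj2 s (Finset.mem_Icc.2 ⟨le_rfl, hsn⟩)) (Finset.mem_Icc.1 hj1).1
  have htake := hP.support_take_eq_Icc hsn hdrop
  have hlen : P.length - (Rmap P).length = d := by rw [hR, List.length_drop]; omega
  have hIcc : Disjoint (Finset.Icc 1 (j - 1)) (Finset.Icc j n) :=
    Finset.disjoint_left.2 fun x hx hx' => by simp only [Finset.mem_Icc] at hx hx'; omega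
  rw [hlen, hR]
  refine ⟨?_, ?_, ?_, rfl⟩
  · obtain ⟨B, hB⟩ := List.exists_mem_of_ne_nil (P.take d)
      (List.length_pos_iff.1 (by simp; omega))
    obtain ⟨x, hx⟩ := hP.1 B (List.mem_of_mem_take hB)
    have := Finset.mem_Icc.1 (htake ▸ subset_support hB hx)
    omega
  · rw [← List.take_append_drop d P, restrict_append_of_disjoint_right _ (hdrop ▸ hIcc.symm),
      List.take_append_drop, hP.restrict_eq_self_of_sublist (List.take_sublist _ _) htake.le]
  · rw [← List.take_append_drop d P, restrict_append_of_disjoint_left _ (htake ▸ hIcc),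
      List.take_append_drop, hP.restrict_eq_self_of_sublist (List.drop_sublist _ _) hdrop.le]
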